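/- arXiv:1602.04580 — 7 statements merged into one kernel-verified Lean document; each statement's English description precedes it below -/
import Mathlib

section
/- If c > λ·∫_ℝ x L(dx) (the net profit condition), then lim_{u→∞} ν(u) = 0; equivalently, the non-ruin probability 1 − ν(u) tends to 1 as the initial capital u tends to infinity. -/
open MeasureTheory ProbabilityTheory Real Set Filter Topology Function

/-!
The increments `X i - c * W i` of the claim-minus-premium walk `S` are i.i.d. with mean
`∫ x ∂L - c / lam`, which is negative by the net profit condition. By the strong law of large
numbers `S n / n` converges almost surely to this mean, so `S n → -∞` and `sup_n S n` is almost
surely finite. The events `{sup_n S n > u}` decrease to a null set as `u → ∞`, hence their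
probabilities, which dominate the ruin probabilities, tend to `0`.
-/

namespace ProbabilityTheory

variable {Ω : Type*} {mΩ : MeasurableSpace Ω} {μ : Measure Ω} {r : ℝ}

lemma expMeasure_eq_withDensity : expMeasure r = volume.withDensity (exponentialPDF r) := rfl

lemma measurable_exponentialPDF : Measurable (exponentialPDF r) :=
  (measurable_exponentialPDFReal r).ennreal_ofReal

lemma exponentialPDF_toReal_smul_id (hr : 0 < r) :
    (fun x => (exponentialPDF r x).toReal • x) =
      (Ioi 0).indicator fun x => r * (x ^ ((2 : ℝ) - 1) * exp (-(r * x))) := by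
  ext x
  rw [exponentialPDF, ENNReal.toReal_ofReal (exponentialPDFReal_nonneg hr x), smul_eq_mul]
  rcases le_or_gt x 0 with hx | hx
  · rw [indicator_of_notMem (notMem_Ioi.2 hx)]
    rcases hx.lt_or_eq with hx | rfl
    · simp [exponentialPDFReal, gammaPDFReal, hx.not_ge]
    · simp
  · rw [indicator_of_mem (mem_Ioi.2 hx)]
    norm_num [exponentialPDFReal, gammaPDFReal, hx.le]
    ring

lemma integral_rpow_mul_exp_neg_mul_Ioi_two (hr : 0 < r) :
    ∫ x in Ioi 0, x ^ ((2 : ℝ) - 1) * exp (-(r * x)) = r⁻¹ ^ 2 := by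
  rw [integral_rpow_mul_exp_neg_mul_Ioi two_pos hr, Gamma_two, mul_one, one_div]
  norm_cast

lemma integrable_id_expMeasure (hr : 0 < r) : Integrable (fun x => x) (expMeasure r) := by
  rw [expMeasure_eq_withDensity, integrable_withDensity_iff_integrable_smul'
    measurable_exponentialPDF (.of_forall fun _ => ENNReal.ofReal_lt_top),
    exponentialPDF_toReal_smul_id hr, integrable_indicator_iff measurableSet_Ioi]
  refine (Integrable.of_integral_ne_zero ?_).const_mul r
  rw [integral_rpow_mul_exp_neg_mul_Ioi_two hr]
  positivity

lemma integral_id_expMeasure (hr : 0 < r) : ∫ x, x ∂expMeasure r = r⁻¹ := by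
  rw [expMeasure_eq_withDensity, integral_withDensity_eq_integral_toReal_smul
    measurable_exponentialPDF (.of_forall fun _ => ENNReal.ofReal_lt_top),
    exponentialPDF_toReal_smul_id hr, integral_indicator measurableSet_Ioi, integral_const_mul,
    integral_rpow_mul_exp_neg_mul_Ioi_two hr]
  field_simp

theorem ae_tendsto_sum_range_atBot_of_integral_neg (Y : ℕ → Ω → ℝ) (hint : Integrable (Y 0) μ)
    (hindep : Pairwise ((· ⟂ᵢ[μ] ·) on Y)) (hident : ∀ i, IdentDistrib (Y i) (Y 0) μ μ)
    (hneg : μ[Y 0] < 0) :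
    ∀ᵐ ω ∂μ, Tendsto (fun n => ∑ i ∈ Finset.range n, Y i ω) atTop atBot := by
  filter_upwards [strong_law_ae_real Y hint hindep hident] with ω hω
  refine (tendsto_natCast_atTop_atTop.atTop_mul_neg hneg hω).congr' ?_
  filter_upwards [eventually_ne_atTop 0] with n hn
  field_simp

theorem tendsto_measure_exists_lt_of_ae_bddAbove [IsFiniteMeasure μ] {ι : Type*} [Countable ι]
    {S : ι → Ω → ℝ} (hS : ∀ i, AEMeasurable (S i) μ)
    (hbdd : ∀ᵐ ω ∂μ, BddAbove (range fun i => S i ω)) :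
    Tendsto (fun u : ℝ => μ {ω | ∃ i, u < S i ω}) atTop (𝓝 0) := by
  have hanti : Antitone fun u : ℝ => {ω | ∃ i, u < S i ω} :=
    fun u v huv ω ⟨i, hi⟩ => ⟨i, huv.trans_lt hi⟩
  have hnull : μ (⋂ u : ℝ, {ω | ∃ i, u < S i ω}) = 0 := by
    refine measure_mono_null (fun ω hω => ?_) (ae_iff.1 hbdd)
    rintro ⟨M, hM⟩
    obtain ⟨i, hi⟩ := mem_iInter.1 hω M
    exact hi.not_ge (hM (mem_range_self i))
  have hmeas (u : ℝ) : NullMeasurableSet {ω | ∃ i, u < S i ω} μ := by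
    rw [ofPred_exists]
    exact .iUnion fun i => nullMeasurableSet_lt aemeasurable_const (hS i)
  rw [← hnull]
  exact tendsto_measure_iInter_atTop hmeas hanti ⟨0, measure_ne_top μ _⟩

theorem iIndepFun.pairwise_indepFun_prodMk_sumElim {ι E : Type*} {mE : MeasurableSpace E}
    {X W : ι → Ω → E} (h : iIndepFun (Sum.elim X W) μ) (hX : ∀ i, Measurable (X i))
    (hW : ∀ i, Measurable (W i)) :
    Pairwise ((· ⟂ᵢ[μ] ·) on fun i ω => (X i ω, W i ω)) := fun i j hij =>
  h.indepFun_prodMk_prodMk (Sum.forall.2 ⟨hX, hW⟩) (.inl i) (.inr i) (.inl j) (.inr j)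
    (by simpa using hij) (by simp) (by simp) (by simpa using hij)

theorem iIndepFun.identDistrib_prodMk_sumElim [IsFiniteMeasure μ] {ι E : Type*}
    {mE : MeasurableSpace E} {X W : ι → Ω → E} (h : iIndepFun (Sum.elim X W) μ)
    (hX : ∀ i j, IdentDistrib (X i) (X j) μ μ) (hW : ∀ i j, IdentDistrib (W i) (W j) μ μ)
    (i j : ι) :
    IdentDistrib (fun ω => (X i ω, W i ω)) (fun ω => (X j ω, W j ω)) μ μ :=
  (hX i j).prodMk (hW i j) (h.indepFun Sum.inl_ne_inr) (h.indepFun Sum.inl_ne_inr)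

end ProbabilityTheory

theorem ruin_tendsto_zero_of_net_profit_general
    {Ω : Type*} [MeasurableSpace Ω] (P : Measure Ω) [IsProbabilityMeasure P]
    (lam : ℝ) (hlam : 0 < lam) (c : ℝ)
    (L : Measure ℝ)
    (hLint : Integrable (fun x => x) L)
    (X W : ℕ → Ω → ℝ)
    (hXmeas : ∀ i, Measurable (X i)) (hWmeas : ∀ i, Measurable (W i))
    (hXlaw : ∀ i, Measure.map (X i) P = L)
    (hWlaw : ∀ i, Measure.map (W i) P = expMeasure lam)
    (hindep : iIndepFun (Sum.elim X W) P)
    (S : ℕ → Ω → ℝ)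
    (hS : ∀ n ω, S n ω = ∑ i ∈ Finset.range n, (X i ω - c * W i ω))
    (ν : ℝ → ℝ)
    (hν_pos : ∀ u : ℝ, 0 ≤ u → ν u = (P {ω | ∃ n : ℕ, 1 ≤ n ∧ S n ω > u}).toReal)
    (hnet : c > lam * ∫ x, x ∂L) :
    Filter.Tendsto ν Filter.atTop (nhds 0) := by
  have hX (i : ℕ) : HasLaw (X i) L P := ⟨(hXmeas i).aemeasurable, hXlaw i⟩
  have hW (i : ℕ) : HasLaw (W i) (expMeasure lam) P := ⟨(hWmeas i).aemeasurable, hWlaw i⟩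
  have hXint : Integrable (X 0) P := ((hX 0).identDistrib HasLaw.id).integrable_iff.2 hLint
  have hWint : Integrable (W 0) P :=
    ((hW 0).identDistrib HasLaw.id).integrable_iff.2 (integrable_id_expMeasure hlam)
  set Y : ℕ → Ω → ℝ := fun i ω => X i ω - c * W i ω
  obtain rfl : S = fun n ω => ∑ i ∈ Finset.range n, Y i ω := funext fun n => funext (hS n)
  have hg : Measurable fun p : ℝ × ℝ => p.1 - c * p.2 := by fun_prop
  have hYindep : Pairwise ((· ⟂ᵢ[P] ·) on Y) := fun i j hij =>
    (hindep.pairwise_indepFun_prodMk_sumElim hXmeas hWmeas hij).comp hg hg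
  have hYident (i : ℕ) : IdentDistrib (Y i) (Y 0) P P :=
    (hindep.identDistrib_prodMk_sumElim (fun i j => (hX i).identDistrib (hX j))
      (fun i j => (hW i).identDistrib (hW j)) i 0).comp hg
  have hYmean : P[Y 0] < 0 := by
    rw [integral_sub hXint (hWint.const_mul c), integral_const_mul, (hX 0).integral_eq,
      (hW 0).integral_eq, integral_id_expMeasure hlam, sub_neg, ← div_eq_mul_inv,
      lt_div_iff₀ hlam]
    linarith
  have hbdd : ∀ᵐ ω ∂P, BddAbove (range fun n => ∑ i ∈ Finset.range n, Y i ω) := by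
    filter_upwards [ae_tendsto_sum_range_atBot_of_integral_neg Y (hXint.sub (hWint.const_mul c))
      hYindep hYident hYmean] with ω hω
    exact bddAbove_range_of_tendsto_atTop_atBot hω
  have hruin := (ENNReal.tendsto_toReal ENNReal.zero_ne_top).comp
    (tendsto_measure_exists_lt_of_ae_bddAbove (fun n => by fun_prop) hbdd)
  refine tendsto_of_tendsto_of_tendsto_of_le_of_le' tendsto_const_nhds hruin ?_ ?_ <;>
    filter_upwards [eventually_ge_atTop 0] with u hu <;> rw [hν_pos u hu]
  · exact ENNReal.toReal_nonneg
  · exact ENNReal.toReal_mono (measure_ne_top _ _) (measure_mono fun ω ⟨n, _, hn⟩ => ⟨n, hn⟩)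

/-- In the Cramér–Lundberg model with claim law `L`, claim arrival
intensity `lam` and premium rate `c`, under the net profit condition
`c > lam * ∫ x ∂L`, the ruin probability tends to `0` as the initial capital tends
to infinity (equivalently, the non-ruin probability tends to `1`). -/
theorem ruin_tendsto_zero_of_net_profit
    {Ω : Type*} [MeasurableSpace Ω] (P : Measure Ω) [IsProbabilityMeasure P]
    (lam : ℝ) (hlam : 0 < lam) (c : ℝ) (hc : 0 ≤ c)
    (L : Measure ℝ) [IsProbabilityMeasure L]
    (hL0 : L {0} = 0)
    (hLint : Integrable (fun x => x) L)
    (hLpos : 0 < ∫ x in Ioi (0 : ℝ), x ∂L)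
    (hLneg : ∫ x in Iio (0 : ℝ), x ∂L < 0)
    (X W : ℕ → Ω → ℝ)
    (hXmeas : ∀ i, Measurable (X i)) (hWmeas : ∀ i, Measurable (W i))
    (hXlaw : ∀ i, Measure.map (X i) P = L)
    (hWlaw : ∀ i, Measure.map (W i) P = expMeasure lam)
    (hindep : iIndepFun (Sum.elim X W) P)
    (S : ℕ → Ω → ℝ)
    (hS : ∀ n ω, S n ω = ∑ i ∈ Finset.range n, (X i ω - c * W i ω))
    (ν : ℝ → ℝ)
    (hν_pos : ∀ u : ℝ, 0 ≤ u → ν u = (P {ω | ∃ n : ℕ, 1 ≤ n ∧ S n ω > u}).toReal)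
    (hν_neg : ∀ u : ℝ, u < 0 → ν u = 1)
    (hnet : c > lam * ∫ x, x ∂L) :
    Filter.Tendsto ν Filter.atTop (nhds 0) :=
  ruin_tendsto_zero_of_net_profit_general P lam hlam c L hLint X W hXmeas hWmeas hXlaw hWlaw hindep
    S hS ν hν_pos hnet
end

section
/- Let a, b, γ, δ, c ∈ (0,∞) satisfy the net profit condition c + δ/a > γ/b. Set D := ((a+b)c + δ)² − 2((a+b)c − δ)γ + γ². Then D > 0, and the number r := (c(b−a) − δ − γ + √D)/(2c) lies in the open interval (0, b) and satisfies c + δ/(a + r) = γ/(b − r). -/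
open Set

/-- Under the net profit condition `c + δ/a > γ/b` (with `c > 0`),
the discriminant `D = ((a+b)c + δ)² - 2((a+b)c - δ)γ + γ²` is positive, and
`r = (c(b-a) - δ - γ + √D)/(2c)` lies in `(0, b)` and solves the
adjustment-coefficient equation `c + δ/(a + r) = γ/(b - r)`. -/
theorem adjustment_coefficient_explicit_root
    (a b γ δ c : ℝ) (ha : 0 < a) (hb : 0 < b) (hγ : 0 < γ) (hδ : 0 < δ)
    (hc : 0 < c) (hnet : c + δ / a > γ / b)
    (D r : ℝ)
    (hD : D = ((a + b) * c + δ) ^ 2 - 2 * ((a + b) * c - δ) * γ + γ ^ 2)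
    (hr : r = (c * (b - a) - δ - γ + Real.sqrt D) / (2 * c)) :
    0 < D ∧ r ∈ Ioo 0 b ∧ c + δ / (a + r) = γ / (b - r) := by
  have hD0 : 0 < D := by
    rw [hD]; nlinarith [sq_nonneg ((a + b) * c + δ - γ), mul_pos hγ hδ]
  set s := Real.sqrt D with hsdef
  have hs : s ^ 2 = D := Real.sq_sqrt hD0.le
  have hsnn : 0 ≤ s := Real.sqrt_nonneg D
  -- net profit condition cleared of denominators
  have h1 : γ * a < c * a * b + δ * b := by
    have h := sub_pos.mpr hnet
    have h2 : 0 < (c + δ / a - γ / b) * (a * b) :=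
      mul_pos h (mul_pos ha hb)
    have e1 : δ / a * a = δ := div_mul_cancel₀ δ ha.ne'
    have e2 : γ / b * b = γ := div_mul_cancel₀ γ hb.ne'
    nlinarith [h2, e1, e2]
  have hr2 : 2 * c * r = c * (b - a) - δ - γ + s := by
    rw [hr]; field_simp
  -- r > 0 : s > c*(a-b) + δ + γ
  have hrpos : 0 < r := by
    have hsq : (c * (a - b) + δ + γ) ^ 2 < s ^ 2 := by
      rw [hs, hD]; nlinarith [h1, hc]
    have hgt : c * (a - b) + δ + γ < s := by nlinarith [hsnn, hsq]
    nlinarith [hr2, hgt, hc]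
  -- r < b : s < c*(a+b) + δ + γ
  have hrlt : r < b := by
    have hE : 0 < c * (a + b) + δ + γ := by positivity
    have hsq : s ^ 2 < (c * (a + b) + δ + γ) ^ 2 := by
      rw [hs, hD]; nlinarith [mul_pos hc (mul_pos hγ (by linarith : (0:ℝ) < a + b))]
    have hlt : s < c * (a + b) + δ + γ := by nlinarith [hsnn, hsq, hE]
    nlinarith [hr2, hlt, hc]
  have har : 0 < a + r := by linarith
  have hbr : 0 < b - r := by linarith
  -- the quadratic equation satisfied by r
  have h2 : (2 * c * r + (c * (a - b) + δ + γ)) ^ 2 = D := by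
    rw [← hs]
    linear_combination (2 * c * r + (c * (a - b) + δ + γ) + s) * hr2
  have key4 : 4 * c * (c * r ^ 2 + (c * (a - b) + δ + γ) * r +
      (γ * a - c * a * b - δ * b)) = 0 := by linear_combination h2 + hD
  have key : c * r ^ 2 + (c * (a - b) + δ + γ) * r +
      (γ * a - c * a * b - δ * b) = 0 := by
    rcases mul_eq_zero.mp key4 with h | h
    · exact absurd h (by positivity)
    · exact h
  refine ⟨hD0, ⟨hrpos, hrlt⟩, ?_⟩
  field_simp
  linear_combination -key
end

section
/- Let ψ : [0,∞) → ℝ be bounded and measurable, and suppose that for every u ∈ [0,∞): c·ψ(u) = −δ·e^{au}·∫_u^∞ ψ(z)e^{−az} dz + γ·e^{−bu}·∫_0^u ψ(z)e^{bz} dz + (γ/b)·e^{−bu}. Then ψ is differentiable on [0,∞) (with the right derivative at 0), and for every u ∈ [0,∞): bc·ψ(u) + c·ψ'(u) = (δ + γ)·ψ(u) − (a+b)·δ·e^{au}·∫_u^∞ ψ(z)e^{−az} dz. -/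
/-!
The right-hand side of the equation is built from `∫_u^∞ ψ e^{-az}` and `∫_0^u ψ e^{bz}`,
which are continuous in `u` because `ψ` is bounded. Hence `ψ` is continuous on `[0,∞)`, so
both integrands are continuous and the fundamental theorem of calculus differentiates the
right-hand side; substituting the equation once more for `b c ψ(u)` gives the stated identity.
-/

open MeasureTheory Set Topology

theorem Icc_mem_nhdsWithin_Ici_of_lt {a b u : ℝ} (h : u < b) : Icc a b ∈ 𝓝[Ici a] u := by
  rw [← Ici_inter_Iic]
  exact inter_mem_nhdsWithin _ (Iic_mem_nhds h)

namespace MeasureTheory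

theorem locallyIntegrableOn_of_norm_le {X E : Type*} [TopologicalSpace X] [MeasurableSpace X]
    [OpensMeasurableSpace X] [LocallyCompactSpace X] [T2Space X] [NormedAddCommGroup E]
    {μ : Measure X} [IsFiniteMeasureOnCompacts μ] {f : X → E} {s : Set X} {M : ℝ}
    (hs : IsLocallyClosed s) (hf : AEStronglyMeasurable f μ) (hM : ∀ x ∈ s, ‖f x‖ ≤ M) :
    LocallyIntegrableOn f s μ :=
  (locallyIntegrableOn_iff hs).2 fun _k hks hk =>
    Measure.integrableOn_of_bounded hk.measure_lt_top.ne hf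
      ((ae_restrict_iff' hk.isClosed.measurableSet).2 (ae_of_all _ fun x hx => hM x (hks hx)))

theorem integrableOn_Ioi_mul_exp_neg {ψ : ℝ → ℝ} {a t M : ℝ} (ha : 0 < a)
    (hψ : AEStronglyMeasurable ψ (volume.restrict (Ioi t))) (hM : ∀ z ∈ Ioi t, |ψ z| ≤ M) :
    IntegrableOn (fun z => ψ z * Real.exp (-(a * z))) (Ioi t) := by
  have hexp := exp_neg_integrableOn_Ioi t ha
  simp only [neg_mul] at hexp
  exact hexp.bdd_mul hψ ((ae_restrict_iff' measurableSet_Ioi).2 (ae_of_all _ hM))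

variable {E : Type*} [NormedAddCommGroup E] [NormedSpace ℝ E] {f : ℝ → E} {a u : ℝ}

theorem LocallyIntegrableOn.continuousOn_Ici_primitive (hf : LocallyIntegrableOn f (Ici a)) :
    ContinuousOn (fun v => ∫ t in a..v, f t) (Ici a) := fun u (hu : a ≤ u) => by
  have hint : IntegrableOn f (uIcc a (u + 1)) := by
    rw [uIcc_of_le (by linarith)]
    exact hf.integrableOn_compact_subset Icc_subset_Ici_self isCompact_Icc
  have := intervalIntegral.continuousOn_primitive_interval hint u
  rw [uIcc_of_le (by linarith)] at this
  exact (this ⟨hu, by linarith⟩).mono_of_mem_nhdsWithin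
    (Icc_mem_nhdsWithin_Ici_of_lt (lt_add_one u))

theorem LocallyIntegrableOn.hasDerivWithinAt_Ici_primitive [CompleteSpace E]
    (hf : LocallyIntegrableOn f (Ici a)) (hu : a ≤ u) (hcont : ContinuousWithinAt f (Ici a) u) :
    HasDerivWithinAt (fun v => ∫ t in a..v, f t) (f u) (Ici a) u := by
  have : Fact (u ∈ Icc a (u + 1)) := ⟨⟨hu, by linarith⟩⟩
  have hint : IntegrableOn f (Icc a (u + 1)) :=
    hf.integrableOn_compact_subset Icc_subset_Ici_self isCompact_Icc
  have hsub : uIcc a u ⊆ Icc a (u + 1) := by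
    rw [uIcc_of_le hu]; exact Icc_subset_Icc_right (by linarith)
  exact (intervalIntegral.integral_hasDerivWithinAt_right (s := Icc a (u + 1))
    (hint.mono_set hsub).intervalIntegrable ⟨_, self_mem_nhdsWithin, hint.aestronglyMeasurable⟩
    (hcont.mono Icc_subset_Ici_self)).mono_of_mem_nhdsWithin
      (Icc_mem_nhdsWithin_Ici_of_lt (lt_add_one u))

theorem IntegrableOn.hasDerivWithinAt_Ici_primitive_Ioi [CompleteSpace E]
    (hf : IntegrableOn f (Ioi a)) (hu : a ≤ u) (hcont : ContinuousWithinAt f (Ici a) u) :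
    HasDerivWithinAt (fun v => ∫ t in Ioi v, f t) (-f u) (Ici a) u := by
  have hloc : LocallyIntegrableOn f (Ici a) :=
    ((integrableOn_Ici_iff_integrableOn_Ioi).2 hf).locallyIntegrableOn
  refine ((hloc.hasDerivWithinAt_Ici_primitive hu hcont).const_sub (∫ t in Ioi a, f t))
    |>.congr_of_mem (fun v (hv : a ≤ v) => ?_) hu
  exact eq_sub_of_add_eq'
    (intervalIntegral.integral_interval_add_Ioi hf (hf.mono_set (Ioi_subset_Ioi hv)))

end MeasureTheory

theorem hasDerivWithinAt_of_eqOn_exp_combination {a b γ δ c u : ℝ} {ψ F G : ℝ → ℝ}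
    {s : Set ℝ} (hc : c ≠ 0)
    (hψ : EqOn ψ (fun v => c⁻¹ * (-δ * Real.exp (a * v) * F v
      + γ * Real.exp (-(b * v)) * G v + γ / b * Real.exp (-(b * v)))) s) (hu : u ∈ s)
    (hF : HasDerivWithinAt F (-(ψ u * Real.exp (-(a * u)))) s u)
    (hG : HasDerivWithinAt G (ψ u * Real.exp (b * u)) s u) :
    HasDerivWithinAt ψ
      (c⁻¹ * ((δ + γ) * ψ u - (a + b) * δ * Real.exp (a * u) * F u) - b * ψ u) s u := by
  have hea : HasDerivAt (fun v => Real.exp (a * v)) (a * Real.exp (a * u)) u := by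
    simpa [mul_comm] using ((hasDerivAt_id u).const_mul a).exp
  have heb : HasDerivAt (fun v => Real.exp (-(b * v))) (-b * Real.exp (-(b * u))) u := by
    simpa [mul_comm] using ((hasDerivAt_id u).const_mul b).neg.exp
  refine ((((hea.const_mul (-δ)).hasDerivWithinAt.mul hF).add
    ((heb.const_mul γ).hasDerivWithinAt.mul hG)).add
    (heb.hasDerivWithinAt.const_mul (γ / b))).const_mul c⁻¹
    |>.congr_of_mem (fun v hv => hψ hv) hu |>.congr_deriv ?_
  have heq : c * ψ u = -δ * Real.exp (a * u) * F u
      + γ * Real.exp (-(b * u)) * G u + γ / b * Real.exp (-(b * u)) :=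
    (eq_inv_mul_iff_mul_eq₀ hc).1 (hψ hu)
  have hexp_a : Real.exp (a * u) * Real.exp (-(a * u)) = 1 := by
    rw [← Real.exp_add, add_neg_cancel, Real.exp_zero]
  have hexp_b : Real.exp (-(b * u)) * Real.exp (b * u) = 1 := by
    rw [← Real.exp_add, neg_add_cancel, Real.exp_zero]
  linear_combination c⁻¹ * (δ * ψ u * hexp_a + γ * ψ u * hexp_b + b * heq)
    - b * ψ u * inv_mul_cancel₀ hc

theorem differentiable_of_integral_equation_general
    (a b γ δ c : ℝ) (ha : 0 < a) (hc : 0 < c)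
    (ψ : ℝ → ℝ) (hmeas : Measurable ψ)
    (hbdd : ∃ M : ℝ, ∀ u : ℝ, 0 ≤ u → |ψ u| ≤ M)
    (heq : ∀ u : ℝ, 0 ≤ u →
      c * ψ u = -δ * Real.exp (a * u) * (∫ z in Ioi u, ψ z * Real.exp (-(a * z)))
        + γ * Real.exp (-(b * u)) * (∫ z in (0:ℝ)..u, ψ z * Real.exp (b * z))
        + (γ / b) * Real.exp (-(b * u))) :
    ∃ ψ' : ℝ → ℝ, ∀ u : ℝ, 0 ≤ u →
      HasDerivWithinAt ψ (ψ' u) (Ici 0) u ∧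
      b * c * ψ u + c * ψ' u
        = (δ + γ) * ψ u
          - (a + b) * δ * Real.exp (a * u) * (∫ z in Ioi u, ψ z * Real.exp (-(a * z))) := by
  obtain ⟨M, hM⟩ := hbdd
  set F : ℝ → ℝ := fun u => ∫ z in Ioi u, ψ z * Real.exp (-(a * z))
  set G : ℝ → ℝ := fun u => ∫ z in (0:ℝ)..u, ψ z * Real.exp (b * z)
  have hf : IntegrableOn (fun z => ψ z * Real.exp (-(a * z))) (Ioi 0) :=
    integrableOn_Ioi_mul_exp_neg ha hmeas.aestronglyMeasurable fun z hz => hM z hz.le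
  have hg : LocallyIntegrableOn (fun z => ψ z * Real.exp (b * z)) (Ici 0) :=
    (locallyIntegrableOn_of_norm_le isClosed_Ici.isLocallyClosed hmeas.aestronglyMeasurable
      hM).mul_continuousOn (by fun_prop) isClosed_Ici.isLocallyClosed
  have hψ : EqOn ψ (fun u => c⁻¹ * (-δ * Real.exp (a * u) * F u
      + γ * Real.exp (-(b * u)) * G u + γ / b * Real.exp (-(b * u)))) (Ici 0) := fun u hu =>
    (eq_inv_mul_iff_mul_eq₀ hc.ne').2 (heq u hu)
  have hψcont : ContinuousOn ψ (Ici 0) := by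
    have := hf.continuousOn_Ici_primitive_Ioi
    have := hg.continuousOn_Ici_primitive
    exact ContinuousOn.congr (by fun_prop) hψ
  refine ⟨fun u => c⁻¹ * ((δ + γ) * ψ u - (a + b) * δ * Real.exp (a * u) * F u) - b * ψ u,
    fun u hu => ⟨?_, by field_simp; ring⟩⟩
  exact hasDerivWithinAt_of_eqOn_exp_combination hc.ne' hψ hu
    (hf.hasDerivWithinAt_Ici_primitive_Ioi hu ((hψcont u hu).mul (by fun_prop)))
    (hg.hasDerivWithinAt_Ici_primitive hu ((hψcont u hu).mul (by fun_prop)))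

/-- If `ψ : [0,∞) → ℝ` is bounded and measurable and satisfies
`c ψ(u) = -δ e^{au} ∫_u^∞ ψ(z)e^{-az} dz + γ e^{-bu} ∫_0^u ψ(z)e^{bz} dz + (γ/b) e^{-bu}`
for all `u ≥ 0`, then `ψ` is differentiable on `[0,∞)` (right derivative at `0`) and
`bc ψ(u) + c ψ'(u) = (δ+γ) ψ(u) - (a+b) δ e^{au} ∫_u^∞ ψ(z)e^{-az} dz` for all `u ≥ 0`. -/
theorem differentiable_of_integral_equation
    (a b γ δ c : ℝ) (ha : 0 < a) (hb : 0 < b) (hγ : 0 < γ) (hδ : 0 < δ) (hc : 0 < c)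
    (ψ : ℝ → ℝ) (hmeas : Measurable ψ)
    (hbdd : ∃ M : ℝ, ∀ u : ℝ, 0 ≤ u → |ψ u| ≤ M)
    (heq : ∀ u : ℝ, 0 ≤ u →
      c * ψ u = -δ * Real.exp (a * u) * (∫ z in Ioi u, ψ z * Real.exp (-(a * z)))
        + γ * Real.exp (-(b * u)) * (∫ z in (0:ℝ)..u, ψ z * Real.exp (b * z))
        + (γ / b) * Real.exp (-(b * u))) :
    ∃ ψ' : ℝ → ℝ, ∀ u : ℝ, 0 ≤ u →
      HasDerivWithinAt ψ (ψ' u) (Ici 0) u ∧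
      b * c * ψ u + c * ψ' u
        = (δ + γ) * ψ u
          - (a + b) * δ * Real.exp (a * u) * (∫ z in Ioi u, ψ z * Real.exp (-(a * z))) :=
  differentiable_of_integral_equation_general a b γ δ c ha hc ψ hmeas hbdd heq
end

section
/- Let ψ : [0,∞) → ℝ be bounded and measurable, and suppose that for every u ∈ [0,∞): c·ψ(u) = −δ·e^{au}·∫_u^∞ ψ(z)e^{−az} dz + γ·e^{−bu}·∫_0^u ψ(z)e^{bz} dz + (γ/b)·e^{−bu}. Then ψ is twice continuously differentiable on [0,∞) (one-sided derivatives at 0) and satisfies the linear ordinary differential equation c·ψ''(u) + (c(b−a) − δ − γ)·ψ'(u) + (aγ − bδ − abc)·ψ(u) = 0 for every u ∈ [0,∞). -/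
/-!
Split the right-hand side as `X + Y` with `X u = -δ e^{au} ∫_u^∞ ψ(z) e^{-az} dz` and
`Y u = γ e^{-bu} (∫_0^u ψ(z) e^{bz} dz + 1/b)`. Boundedness of `ψ` makes `X` and `Y` continuous,
hence `ψ = (X + Y)/c` is continuous, and then the fundamental theorem of calculus turns the
integral equation into the first-order system `X' = aX + δψ`, `Y' = -bY + γψ`, `cψ = X + Y`.
Differentiating `cψ = X + Y` twice and eliminating `X` and `Y` gives the ODE.
-/

open MeasureTheory Set

lemma hasDerivWithinAt_primitive_Ici {g : ℝ → ℝ} {s u : ℝ} (hg : ContinuousOn g (Ici s))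
    (hu : s ≤ u) : HasDerivWithinAt (fun x => ∫ z in s..x, g z) (g u) (Ici s) u := by
  have hext : Continuous fun x => g (max x s) :=
    hg.comp_continuous (continuous_id.max continuous_const) fun x => le_max_right x s
  have hprim : ∀ x ∈ Ici s, ∫ z in s..x, g z = ∫ z in s..x, g (max z s) := fun x hx =>
    intervalIntegral.integral_congr fun z hz => by
      rw [uIcc_of_le hx] at hz
      rw [max_eq_left hz.1]
  have hderiv := ((hext.integral_hasStrictDerivAt s u).hasDerivAt.hasDerivWithinAt (s := Ici s))
  rw [max_eq_left hu] at hderiv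
  exact hderiv.congr hprim (hprim u hu)

lemma continuousOn_primitive_Ici {g : ℝ → ℝ} {s : ℝ}
    (hg : ∀ u, s ≤ u → IntervalIntegrable g volume s u) :
    ContinuousOn (fun x => ∫ z in s..x, g z) (Ici s) := by
  intro u (hu : s ≤ u)
  have hcont := intervalIntegral.continuousOn_primitive_interval' (hg (u + 1) (by linarith))
    left_mem_uIcc
  rw [uIcc_of_le (by linarith)] at hcont
  refine (hcont u ⟨hu, by linarith⟩).mono_of_mem_nhdsWithin ?_
  rw [← Ici_inter_Iic]
  exact inter_mem_nhdsWithin _ (Iic_mem_nhds (lt_add_one u))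

lemma hasDerivWithinAt_integral_Ioi {f : ℝ → ℝ} {s u : ℝ} (hf : IntegrableOn f (Ioi s))
    (hfc : ContinuousOn f (Ici s)) (hu : s ≤ u) :
    HasDerivWithinAt (fun x => ∫ z in Ioi x, f z) (-f u) (Ici s) u := by
  have htail : ∀ x ∈ Ici s, ∫ z in Ioi x, f z = (∫ z in Ioi s, f z) - ∫ z in s..x, f z :=
    fun x hx => by rw [← intervalIntegral.integral_Ioi_sub_Ioi hf hx, sub_sub_cancel]
  exact ((hasDerivWithinAt_primitive_Ici hfc hu).const_sub _).congr htail (htail u hu)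

lemma HasDerivWithinAt.exp_mul_of_mul_exp_neg {T : ℝ → ℝ} {h k u : ℝ} {s : Set ℝ}
    (hT : HasDerivWithinAt T (h * Real.exp (-(k * u))) s u) :
    HasDerivWithinAt (fun x => Real.exp (k * x) * T x) (k * (Real.exp (k * u) * T u) + h) s u := by
  have hexp : HasDerivWithinAt (fun x => Real.exp (k * x)) (Real.exp (k * u) * k) s u :=
    (((hasDerivAt_id u).const_mul k).exp.hasDerivWithinAt).congr_deriv (by simp)
  have hcancel : Real.exp (k * u) * Real.exp (-(k * u)) = 1 := by rw [← Real.exp_add]; simp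
  refine (hexp.mul hT).congr_deriv ?_
  linear_combination h * hcancel

lemma hasDerivWithinAt_exp_mul_integral_Ioi {ψ : ℝ → ℝ} {a δ s u : ℝ}
    (hf : IntegrableOn (fun z => ψ z * Real.exp (-(a * z))) (Ioi s))
    (hψ : ContinuousOn ψ (Ici s)) (hu : s ≤ u) :
    HasDerivWithinAt (fun x => -δ * Real.exp (a * x) * ∫ z in Ioi x, ψ z * Real.exp (-(a * z)))
      (a * (-δ * Real.exp (a * u) * ∫ z in Ioi u, ψ z * Real.exp (-(a * z))) + δ * ψ u)
      (Ici s) u := by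
  have hT := hasDerivWithinAt_integral_Ioi hf (by fun_prop) hu
  rw [← neg_mul] at hT
  simp only [mul_assoc]
  exact (hT.exp_mul_of_mul_exp_neg.const_mul (-δ)).congr_deriv (by ring)

lemma hasDerivWithinAt_exp_neg_mul_primitive {ψ : ℝ → ℝ} {b γ s u : ℝ}
    (hψ : ContinuousOn ψ (Ici s)) (hu : s ≤ u) :
    HasDerivWithinAt (fun x => γ * Real.exp (-(b * x)) * (∫ z in s..x, ψ z * Real.exp (b * z))
        + γ / b * Real.exp (-(b * x)))
      (-b * (γ * Real.exp (-(b * u)) * (∫ z in s..u, ψ z * Real.exp (b * z))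
        + γ / b * Real.exp (-(b * u))) + γ * ψ u) (Ici s) u := by
  have hJ : HasDerivWithinAt (fun x => (∫ z in s..x, ψ z * Real.exp (b * z)) + 1 / b)
      (ψ u * Real.exp (-(-b * u))) (Ici s) u := by
    rw [neg_mul, neg_neg]
    exact (hasDerivWithinAt_primitive_Ici (by fun_prop) hu).add_const _
  have hfun : (fun x => γ * Real.exp (-(b * x)) * (∫ z in s..x, ψ z * Real.exp (b * z))
      + γ / b * Real.exp (-(b * x))) =
      fun x => γ * (Real.exp (-b * x) * ((∫ z in s..x, ψ z * Real.exp (b * z)) + 1 / b)) := by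
    funext x; simp only [neg_mul]; ring
  rw [hfun]
  exact (hJ.exp_mul_of_mul_exp_neg.const_mul γ).congr_deriv (by simp only [neg_mul]; ring)

lemma ode_of_linear_system {a b γ δ c : ℝ} (hc : c ≠ 0) {s : Set ℝ} {ψ X Y : ℝ → ℝ}
    (hψ : ∀ u ∈ s, c * ψ u = X u + Y u)
    (hX : ∀ u ∈ s, HasDerivWithinAt X (a * X u + δ * ψ u) s u)
    (hY : ∀ u ∈ s, HasDerivWithinAt Y (-b * Y u + γ * ψ u) s u) :
    ∃ ψ' ψ'' : ℝ → ℝ,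
      (∀ u ∈ s, HasDerivWithinAt ψ (ψ' u) s u) ∧
      (∀ u ∈ s, HasDerivWithinAt ψ' (ψ'' u) s u) ∧
      ContinuousOn ψ'' s ∧
      (∀ u ∈ s,
        c * ψ'' u + (c * (b - a) - δ - γ) * ψ' u + (a * γ - b * δ - a * b * c) * ψ u = 0) := by
  have hψX : ∀ u ∈ s, ψ u = (X u + Y u) / c := fun u hu => by
    rw [← hψ u hu, mul_div_cancel_left₀ _ hc]
  set ψ' : ℝ → ℝ := fun u => (a * X u - b * Y u + (δ + γ) * ψ u) / c
  have hψ' : ∀ u ∈ s, HasDerivWithinAt ψ (ψ' u) s u := fun u hu => by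
    refine (((hX u hu).add (hY u hu)).div_const c).congr hψX (hψX u hu) |>.congr_deriv ?_
    simp only [ψ']; ring
  refine ⟨ψ', fun u => (a * (a * X u + δ * ψ u) - b * (-b * Y u + γ * ψ u)
    + (δ + γ) * ψ' u) / c, hψ', fun u hu => ?_, ?_, fun u hu => ?_⟩
  · exact ((((hX u hu).const_mul a).sub ((hY u hu).const_mul b)).add
      ((hψ' u hu).const_mul (δ + γ))).div_const c
  · have hXc : ContinuousOn X s := fun u hu => (hX u hu).continuousWithinAt
    have hYc : ContinuousOn Y s := fun u hu => (hY u hu).continuousWithinAt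
    have hψc : ContinuousOn ψ s := fun u hu => (hψ' u hu).continuousWithinAt
    fun_prop
  · have hcψ' : c * ψ' u = a * X u - b * Y u + (δ + γ) * ψ u := mul_div_cancel₀ _ hc
    rw [mul_div_cancel₀ _ hc]
    linear_combination (b - a) * hcψ' - a * b * hψ u hu

theorem ode_of_integral_equation_general
    (a b γ δ c : ℝ) (ha : 0 < a) (hc : 0 < c)
    (ψ : ℝ → ℝ) (hmeas : Measurable ψ)
    (hbdd : ∃ M : ℝ, ∀ u : ℝ, 0 ≤ u → |ψ u| ≤ M)
    (heq : ∀ u : ℝ, 0 ≤ u →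
      c * ψ u = -δ * Real.exp (a * u) * (∫ z in Ioi u, ψ z * Real.exp (-(a * z)))
        + γ * Real.exp (-(b * u)) * (∫ z in (0:ℝ)..u, ψ z * Real.exp (b * z))
        + (γ / b) * Real.exp (-(b * u))) :
    ∃ ψ' ψ'' : ℝ → ℝ,
      (∀ u : ℝ, 0 ≤ u → HasDerivWithinAt ψ (ψ' u) (Ici 0) u) ∧
      (∀ u : ℝ, 0 ≤ u → HasDerivWithinAt ψ' (ψ'' u) (Ici 0) u) ∧
      ContinuousOn ψ'' (Ici 0) ∧
      (∀ u : ℝ, 0 ≤ u →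
        c * ψ'' u + (c * (b - a) - δ - γ) * ψ' u + (a * γ - b * δ - a * b * c) * ψ u = 0) := by
  obtain ⟨M, hM⟩ := hbdd
  have hbdd_mul {w : ℝ → ℝ} {S : Set ℝ} (hS : MeasurableSet S) (hS0 : S ⊆ Ici 0)
      (hw : IntegrableOn w S) : IntegrableOn (fun z => ψ z * w z) S := by
    exact hw.bdd_mul hmeas.aestronglyMeasurable
      (ae_restrict_of_forall_mem hS fun z hz => hM z (hS0 hz))
  have hf : IntegrableOn (fun z => ψ z * Real.exp (-(a * z))) (Ioi 0) :=
    hbdd_mul measurableSet_Ioi Ioi_subset_Ici_self (by simpa using exp_neg_integrableOn_Ioi 0 ha)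
  have hg (u : ℝ) (hu : 0 ≤ u) :
      IntervalIntegrable (fun z => ψ z * Real.exp (b * z)) volume 0 u :=
    (intervalIntegrable_iff_integrableOn_Ioc_of_le hu).2 <|
      hbdd_mul measurableSet_Ioc (Ioc_subset_Ioi_self.trans Ioi_subset_Ici_self)
        (by fun_prop : Continuous _).integrableOn_Ioc
  set X : ℝ → ℝ := fun u => -δ * Real.exp (a * u) * ∫ z in Ioi u, ψ z * Real.exp (-(a * z))
  set Y : ℝ → ℝ := fun u => γ * Real.exp (-(b * u)) * (∫ z in (0:ℝ)..u, ψ z * Real.exp (b * z))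
    + (γ / b) * Real.exp (-(b * u))
  have hψXY : ∀ u ∈ Ici 0, c * ψ u = X u + Y u := fun u hu => (heq u hu).trans (add_assoc _ _ _)
  -- Continuity comes first, from the integrals alone; it is what makes the integrands continuous.
  have hψc : ContinuousOn ψ (Ici 0) := by
    have hT := hf.continuousOn_Ici_primitive_Ioi
    have hJ := continuousOn_primitive_Ici hg
    refine ContinuousOn.congr (f := fun u => (X u + Y u) / c) (by fun_prop) fun u hu => ?_
    exact eq_div_of_mul_eq hc.ne' ((mul_comm _ _).trans (hψXY u hu))
  exact ode_of_linear_system hc.ne' hψXY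
    (fun u hu => hasDerivWithinAt_exp_mul_integral_Ioi hf hψc hu)
    (fun u hu => hasDerivWithinAt_exp_neg_mul_primitive hψc hu)

/-- If `ψ : [0,∞) → ℝ` is bounded and measurable and satisfies
`c ψ(u) = -δ e^{au} ∫_u^∞ ψ(z)e^{-az} dz + γ e^{-bu} ∫_0^u ψ(z)e^{bz} dz + (γ/b) e^{-bu}`
for all `u ≥ 0`, then `ψ` is of class `C²` on `[0,∞)` (one-sided derivatives at `0`)
and satisfies the ODE `c ψ'' + (c(b-a) - δ - γ) ψ' + (aγ - bδ - abc) ψ = 0` there. -/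
theorem ode_of_integral_equation
    (a b γ δ c : ℝ) (ha : 0 < a) (hb : 0 < b) (hγ : 0 < γ) (hδ : 0 < δ) (hc : 0 < c)
    (ψ : ℝ → ℝ) (hmeas : Measurable ψ)
    (hbdd : ∃ M : ℝ, ∀ u : ℝ, 0 ≤ u → |ψ u| ≤ M)
    (heq : ∀ u : ℝ, 0 ≤ u →
      c * ψ u = -δ * Real.exp (a * u) * (∫ z in Ioi u, ψ z * Real.exp (-(a * z)))
        + γ * Real.exp (-(b * u)) * (∫ z in (0:ℝ)..u, ψ z * Real.exp (b * z))
        + (γ / b) * Real.exp (-(b * u))) :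
    ∃ ψ' ψ'' : ℝ → ℝ,
      (∀ u : ℝ, 0 ≤ u → HasDerivWithinAt ψ (ψ' u) (Ici 0) u) ∧
      (∀ u : ℝ, 0 ≤ u → HasDerivWithinAt ψ' (ψ'' u) (Ici 0) u) ∧
      ContinuousOn ψ'' (Ici 0) ∧
      (∀ u : ℝ, 0 ≤ u →
        c * ψ'' u + (c * (b - a) - δ - γ) * ψ' u + (a * γ - b * δ - a * b * c) * ψ u = 0) :=
  ode_of_integral_equation_general a b γ δ c ha hc ψ hmeas hbdd heq
end

section
/- Assume the net profit condition c + δ/a > γ/b, and let r be the unique solution in (0, b) of the adjustment-coefficient equation c + δ/(a + r) = γ/(b − r). Let f : [0,∞) → ℝ be a bounded, twice continuously differentiable function satisfying c·f''(u) + (c(b−a) − δ − γ)·f'(u) + (aγ − bδ − abc)·f(u) = 0 for all u ∈ [0,∞). Then f(u) = f(0)·e^{−r·u} for all u ∈ [0,∞). -/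
/-!
Put `s := r - (c(b-a) - δ - γ)/c`. Since `-r` is a root of the characteristic polynomial, it
factors as `c(λ + r)(λ - s)`; its constant term `-crs = aγ - bδ - abc` is negative by the net
profit condition, so `s > 0`. The function `f' - s f` solves the first-order equation of the
root `-r`, hence equals `K e^{-ru}`. Then `f(u) e^{-su} + K/(r+s) e^{-(r+s)u}` has derivative
zero, and it tends to `0` because `f` is bounded and `s, r + s > 0`; so it vanishes identically,
which gives `f(u) = f(0) e^{-ru}`.
-/

open Set Filter Topology Real

theorem eq_of_hasDerivWithinAt_Ici_zero {F : ℝ → ℝ}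
    (hF : ∀ u, 0 ≤ u → HasDerivWithinAt F 0 (Ici 0) u) {u : ℝ} (hu : 0 ≤ u) :
    F u = F 0 :=
  constant_of_has_deriv_right_zero
    (fun x hx => (hF x hx.1).continuousWithinAt.mono Icc_subset_Ici_self)
    (fun x hx => (hF x hx.1).mono (Ici_subset_Ici.mpr hx.1)) u ⟨hu, le_rfl⟩

theorem hasDerivAt_exp_const_mul (k u : ℝ) :
    HasDerivAt (fun u => exp (k * u)) (exp (k * u) * k) u := by
  simpa using ((hasDerivAt_id u).const_mul k).exp

theorem eq_mul_exp_of_hasDerivWithinAt_Ici {F F' : ℝ → ℝ} {k : ℝ}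
    (hF : ∀ u, 0 ≤ u → HasDerivWithinAt F (F' u) (Ici 0) u)
    (hF' : ∀ u, 0 ≤ u → F' u = k * F u) {u : ℝ} (hu : 0 ≤ u) :
    F u = F 0 * exp (k * u) := by
  have hconst : ∀ v, 0 ≤ v →
      HasDerivWithinAt (fun v => F v * exp (-k * v)) 0 (Ici 0) v := fun v hv => by
    refine ((hF v hv).mul (hasDerivAt_exp_const_mul (-k) v).hasDerivWithinAt).congr_deriv ?_
    rw [hF' v hv]; ring
  have h := eq_of_hasDerivWithinAt_Ici_zero hconst hu
  rw [neg_mul, exp_neg, mul_zero, exp_zero, mul_one, ← div_eq_mul_inv,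
    div_eq_iff (exp_pos _).ne'] at h
  exact h

theorem tendsto_exp_neg_mul_atTop_nhds_zero {s : ℝ} (hs : 0 < s) :
    Tendsto (fun u => exp (-s * u)) atTop (𝓝 0) :=
  tendsto_exp_atBot.comp (tendsto_id.const_mul_atTop_of_neg (neg_neg_of_pos hs))

theorem tendsto_mul_exp_neg_mul_atTop_of_bounded {f : ℝ → ℝ} {s : ℝ} (hs : 0 < s)
    (hbdd : ∃ M, ∀ u, 0 ≤ u → |f u| ≤ M) :
    Tendsto (fun u => f u * exp (-s * u)) atTop (𝓝 0) := by
  obtain ⟨M, hM⟩ := hbdd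
  exact isBoundedUnder_le_mul_tendsto_zero
    (isBoundedUnder_of_eventually_le (a := M) ((eventually_ge_atTop 0).mono hM))
    (tendsto_exp_neg_mul_atTop_nhds_zero hs)

theorem eq_mul_exp_of_bounded_of_second_order {f f' f'' : ℝ → ℝ} {r s : ℝ} (hs : 0 < s)
    (hrs : 0 < r + s) (hbdd : ∃ M, ∀ u, 0 ≤ u → |f u| ≤ M)
    (hf' : ∀ u, 0 ≤ u → HasDerivWithinAt f (f' u) (Ici 0) u)
    (hf'' : ∀ u, 0 ≤ u → HasDerivWithinAt f' (f'' u) (Ici 0) u)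
    (hode : ∀ u, 0 ≤ u → f'' u = (s - r) * f' u + r * s * f u) {u : ℝ} (hu : 0 ≤ u) :
    f u = f 0 * exp (-r * u) := by
  have hexp_add : ∀ v, exp (-(r + s) * v) = exp (-r * v) * exp (-s * v) := fun v => by
    rw [← exp_add]; ring_nf
  have hdecay : ∀ v, 0 ≤ v → f' v - s * f v = (f' 0 - s * f 0) * exp (-r * v) := fun v hv =>
    eq_mul_exp_of_hasDerivWithinAt_Ici (F := fun v => f' v - s * f v)
      (fun w hw => (hf'' w hw).sub ((hf' w hw).const_mul s))
      (fun w hw => by rw [hode w hw]; ring) hv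
  obtain ⟨A, hA⟩ : ∃ A, A * (r + s) = f' 0 - s * f 0 := ⟨_, div_mul_cancel₀ _ hrs.ne'⟩
  set ψ := fun v => f v * exp (-s * v) + A * exp (-(r + s) * v) with hψ
  have hψ_deriv : ∀ v, 0 ≤ v → HasDerivWithinAt ψ 0 (Ici 0) v := fun v hv => by
    refine (((hf' v hv).mul (hasDerivAt_exp_const_mul (-s) v).hasDerivWithinAt).add
      ((hasDerivAt_exp_const_mul (-(r + s)) v).hasDerivWithinAt.const_mul A)).congr_deriv ?_
    linear_combination exp (-s * v) * hdecay v hv - exp (-(r + s) * v) * hA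
      - (f' 0 - s * f 0) * hexp_add v
  have hψ_lim : Tendsto ψ atTop (𝓝 0) := by
    simpa only [add_zero, mul_zero] using (tendsto_mul_exp_neg_mul_atTop_of_bounded hs hbdd).add
      ((tendsto_exp_neg_mul_atTop_nhds_zero hrs).const_mul A)
  have hψ_zero : ψ 0 = 0 := tendsto_nhds_unique (tendsto_const_nhds.congr'
    ((eventually_ge_atTop 0).mono fun v hv => (eq_of_hasDerivWithinAt_Ici_zero hψ_deriv hv).symm))
    hψ_lim
  have hψu := eq_of_hasDerivWithinAt_Ici_zero hψ_deriv hu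
  simp only [hψ, mul_zero, exp_zero, mul_one, hexp_add] at hψu hψ_zero
  refine mul_right_cancel₀ (exp_pos (-s * u)).ne' ?_
  linear_combination hψu + (1 - exp (-r * u) * exp (-s * u)) * hψ_zero

theorem exists_pos_root_of_adjustment_eq {a b γ δ c r : ℝ} (ha : 0 < a) (hb : 0 < b)
    (hc : 0 < c) (hnet : c + δ / a > γ / b) (hr_mem : r ∈ Ioo 0 b)
    (hr_eq : c + δ / (a + r) = γ / (b - r)) :
    ∃ s, 0 < s ∧ c * (b - a) - δ - γ = c * (r - s) ∧ a * γ - b * δ - a * b * c = -(c * r * s) := by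
  obtain ⟨hr0, hrb⟩ := hr_mem
  have har : a + r ≠ 0 := by positivity
  have hbr : b - r ≠ 0 := (sub_pos.mpr hrb).ne'
  have hquad : c * r ^ 2 - (c * (b - a) - δ - γ) * r + (a * γ - b * δ - a * b * c) = 0 := by
    field_simp at hr_eq
    linear_combination -hr_eq
  have hconst : a * γ - b * δ - a * b * c < 0 := by
    have h := mul_lt_mul_of_pos_left hnet (mul_pos ha hb)
    field_simp at h
    linarith
  obtain ⟨s, hB⟩ : ∃ s, c * (b - a) - δ - γ = c * (r - s) :=
    ⟨r - (c * (b - a) - δ - γ) / c, by field_simp; ring⟩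
  have hC : a * γ - b * δ - a * b * c = -(c * r * s) := by
    linear_combination hquad + r * hB
  exact ⟨s, pos_of_mul_pos_right (by linarith : 0 < c * r * s) (mul_pos hc hr0).le, hB, hC⟩

theorem bounded_ode_solution_is_exponential_general
    (a b γ δ c : ℝ) (ha : 0 < a) (hb : 0 < b) (hc : 0 < c)
    (hnet : c + δ / a > γ / b)
    (r : ℝ) (hr_mem : r ∈ Ioo 0 b) (hr_eq : c + δ / (a + r) = γ / (b - r))
    (f f' f'' : ℝ → ℝ)
    (hbdd : ∃ M : ℝ, ∀ u : ℝ, 0 ≤ u → |f u| ≤ M)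
    (hf' : ∀ u : ℝ, 0 ≤ u → HasDerivWithinAt f (f' u) (Ici 0) u)
    (hf'' : ∀ u : ℝ, 0 ≤ u → HasDerivWithinAt f' (f'' u) (Ici 0) u)
    (hode : ∀ u : ℝ, 0 ≤ u →
      c * f'' u + (c * (b - a) - δ - γ) * f' u + (a * γ - b * δ - a * b * c) * f u = 0) :
    ∀ u : ℝ, 0 ≤ u → f u = f 0 * Real.exp (-r * u) := by
  obtain ⟨s, hs, hB, hC⟩ := exists_pos_root_of_adjustment_eq ha hb hc hnet hr_mem hr_eq
  refine fun u hu => eq_mul_exp_of_bounded_of_second_order hs (by linarith [hr_mem.1]) hbdd hf' hf''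
    (fun v hv => mul_left_cancel₀ hc.ne' ?_) hu
  linear_combination hode v hv - f' v * hB - f v * hC

/-- Under the net profit condition `c + δ/a > γ/b`, if `r` is the
(unique) solution in `(0, b)` of the adjustment-coefficient equation
`c + δ/(a + r) = γ/(b - r)`, then every bounded, twice continuously differentiable
solution `f` on `[0,∞)` of the ODE
`c f'' + (c(b-a) - δ - γ) f' + (aγ - bδ - abc) f = 0` is of the form
`f(u) = f(0) e^{-ru}`. -/
theorem bounded_ode_solution_is_exponential
    (a b γ δ c : ℝ) (ha : 0 < a) (hb : 0 < b) (hγ : 0 < γ) (hδ : 0 < δ) (hc : 0 < c)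
    (hnet : c + δ / a > γ / b)
    (r : ℝ) (hr_mem : r ∈ Ioo 0 b) (hr_eq : c + δ / (a + r) = γ / (b - r))
    (f f' f'' : ℝ → ℝ)
    (hbdd : ∃ M : ℝ, ∀ u : ℝ, 0 ≤ u → |f u| ≤ M)
    (hf' : ∀ u : ℝ, 0 ≤ u → HasDerivWithinAt f (f' u) (Ici 0) u)
    (hf'' : ∀ u : ℝ, 0 ≤ u → HasDerivWithinAt f' (f'' u) (Ici 0) u)
    (hf''cont : ContinuousOn f'' (Ici 0))
    (hode : ∀ u : ℝ, 0 ≤ u →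
      c * f'' u + (c * (b - a) - δ - γ) * f' u + (a * γ - b * δ - a * b * c) * f u = 0) :
    ∀ u : ℝ, 0 ≤ u → f u = f 0 * Real.exp (-r * u) :=
  bounded_ode_solution_is_exponential_general a b γ δ c ha hb hc hnet r hr_mem hr_eq f f' f'' hbdd
    hf' hf'' hode
end

section
/- Let r ∈ (0, b) satisfy the adjustment-coefficient equation c + δ/(a + r) = γ/(b − r), and define ψ(u) := (1 − r/b)·e^{−r·u} for u ∈ [0,∞). Then for every u ∈ [0,∞): c·ψ(u) = −δ·e^{au}·∫_u^∞ ψ(z)e^{−az} dz + γ·e^{−bu}·∫_0^u ψ(z)e^{bz} dz + (γ/b)·e^{−bu}. Moreover, if A ∈ ℝ is such that u ↦ A·e^{−r·u} satisfies the same equation for all u ∈ [0,∞), then A = 1 − r/b. -/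
/-! For `ψ = A e^{-r·}` both integrals are elementary: the right-hand side equals
`A (γ/(b - r) - δ/(a + r)) e^{-ru} + (γ/b - γA/(b - r)) e^{-bu}`. The adjustment-coefficient
equation turns the first coefficient into `cA`, so the equation holds at a point `u` exactly when
the coefficient of `e^{-bu}` vanishes, i.e. when `A = 1 - r/b`. -/

open MeasureTheory Set Real

theorem intervalIntegral_exp_mul {k : ℝ} (hk : k ≠ 0) (u : ℝ) :
    ∫ z in (0:ℝ)..u, exp (k * z) = (exp (k * u) - 1) / k := by
  rw [intervalIntegral.integral_comp_mul_left (fun x => exp x) hk, integral_exp]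
  simp [div_eq_inv_mul]

section ExponentialAnsatz

variable {a b c r γ δ : ℝ}

theorem integral_Ioi_exp_mul_exp_neg_mul (hra : 0 < a + r) (A u : ℝ) :
    ∫ z in Ioi u, A * exp (-r * z) * exp (-(a * z)) = A * exp (-((a + r) * u)) / (a + r) := by
  have hexp : ∀ z, A * exp (-r * z) * exp (-(a * z)) = A * exp (-(a + r) * z) := fun z => by
    rw [mul_assoc, ← exp_add]; ring_nf
  simp_rw [hexp, integral_const_mul, integral_exp_mul_Ioi (neg_neg_of_pos hra),
    neg_div_neg_eq, neg_mul, mul_div_assoc]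

theorem intervalIntegral_exp_mul_exp_mul (hrb : r ≠ b) (A u : ℝ) :
    ∫ z in (0:ℝ)..u, A * exp (-r * z) * exp (b * z)
      = A * ((exp ((b - r) * u) - 1) / (b - r)) := by
  have hexp : ∀ z, A * exp (-r * z) * exp (b * z) = A * exp ((b - r) * z) := fun z => by
    rw [mul_assoc, ← exp_add]; ring_nf
  simp_rw [hexp, intervalIntegral.integral_const_mul,
    intervalIntegral_exp_mul (sub_ne_zero.2 hrb.symm)]

theorem rhs_exp_eq (hra : 0 < a + r) (hrb : r ≠ b) (A u : ℝ) :
    -δ * exp (a * u) * (∫ z in Ioi u, A * exp (-r * z) * exp (-(a * z)))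
        + γ * exp (-(b * u)) * (∫ z in (0:ℝ)..u, A * exp (-r * z) * exp (b * z))
        + (γ / b) * exp (-(b * u))
      = A * (γ / (b - r) - δ / (a + r)) * exp (-r * u)
        + (γ / b - γ * A / (b - r)) * exp (-(b * u)) := by
  rw [integral_Ioi_exp_mul_exp_neg_mul hra, intervalIntegral_exp_mul_exp_mul hrb]
  have hau : exp (a * u) * exp (-((a + r) * u)) = exp (-r * u) := by
    rw [← exp_add]; ring_nf
  have hbu : exp (-(b * u)) * exp ((b - r) * u) = exp (-r * u) := by
    rw [← exp_add]; ring_nf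
  linear_combination (-δ * A / (a + r)) * hau + (γ * A / (b - r)) * hbu

theorem exp_ansatz_solves_iff (hra : 0 < a + r) (hrb : r ≠ b)
    (hr_eq : c + δ / (a + r) = γ / (b - r)) (A u : ℝ) :
    c * (A * exp (-r * u))
        = -δ * exp (a * u) * (∫ z in Ioi u, A * exp (-r * z) * exp (-(a * z)))
          + γ * exp (-(b * u)) * (∫ z in (0:ℝ)..u, A * exp (-r * z) * exp (b * z))
          + (γ / b) * exp (-(b * u))
      ↔ γ * A / (b - r) = γ / b := by
  rw [rhs_exp_eq hra hrb, ← hr_eq, add_sub_cancel_right, mul_left_comm, ← mul_assoc,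
    left_eq_add, mul_eq_zero, sub_eq_zero, eq_comm]
  simp [exp_ne_zero]

end ExponentialAnsatz

theorem exponential_solution_of_integral_equation_general
    (a b γ δ : ℝ) (ha : 0 < a) (hγ : 0 < γ)
    (c : ℝ)
    (r : ℝ) (hr_mem : r ∈ Ioo 0 b) (hr_eq : c + δ / (a + r) = γ / (b - r))
    (ψ : ℝ → ℝ) (hψ : ∀ u : ℝ, ψ u = (1 - r / b) * Real.exp (-r * u)) :
    (∀ u : ℝ, 0 ≤ u →
      c * ψ u = -δ * Real.exp (a * u) * (∫ z in Ioi u, ψ z * Real.exp (-(a * z)))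
        + γ * Real.exp (-(b * u)) * (∫ z in (0:ℝ)..u, ψ z * Real.exp (b * z))
        + (γ / b) * Real.exp (-(b * u))) ∧
    (∀ A : ℝ,
      (∀ u : ℝ, 0 ≤ u →
        c * (A * Real.exp (-r * u))
          = -δ * Real.exp (a * u)
              * (∫ z in Ioi u, A * Real.exp (-r * z) * Real.exp (-(a * z)))
            + γ * Real.exp (-(b * u))
              * (∫ z in (0:ℝ)..u, A * Real.exp (-r * z) * Real.exp (b * z))
            + (γ / b) * Real.exp (-(b * u))) →
      A = 1 - r / b) := by
  obtain ⟨hr0, hrb⟩ := hr_mem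
  have hra : 0 < a + r := by linarith
  have hb : b ≠ 0 := (hr0.trans hrb).ne'
  have hcoef : ∀ A, γ * A / (b - r) = γ / b ↔ A = 1 - r / b := fun A => by
    rw [div_eq_div_iff (by linarith) hb, one_sub_div hb, eq_div_iff hb, mul_assoc,
      mul_right_inj' hγ.ne']
  obtain rfl : ψ = fun u => (1 - r / b) * exp (-r * u) := funext hψ
  exact ⟨fun u _ => (exp_ansatz_solves_iff hra hrb.ne hr_eq _ u).2 ((hcoef _).2 rfl),
    fun A hA => (hcoef A).1 ((exp_ansatz_solves_iff hra hrb.ne hr_eq A 0).1 (hA 0 le_rfl))⟩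

/-- If `r ∈ (0, b)` solves the adjustment-coefficient equation
`c + δ/(a + r) = γ/(b - r)` and `ψ(u) := (1 - r/b) e^{-ru}`, then `ψ` satisfies
`c ψ(u) = -δ e^{au} ∫_u^∞ ψ(z)e^{-az} dz + γ e^{-bu} ∫_0^u ψ(z)e^{bz} dz + (γ/b) e^{-bu}`
for all `u ≥ 0`; moreover `A = 1 - r/b` is the only constant for which
`u ↦ A e^{-ru}` satisfies this equation. -/
theorem exponential_solution_of_integral_equation
    (a b γ δ : ℝ) (ha : 0 < a) (hb : 0 < b) (hγ : 0 < γ) (hδ : 0 < δ)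
    (c : ℝ) (hc : 0 ≤ c)
    (r : ℝ) (hr_mem : r ∈ Ioo 0 b) (hr_eq : c + δ / (a + r) = γ / (b - r))
    (ψ : ℝ → ℝ) (hψ : ∀ u : ℝ, ψ u = (1 - r / b) * Real.exp (-r * u)) :
    (∀ u : ℝ, 0 ≤ u →
      c * ψ u = -δ * Real.exp (a * u) * (∫ z in Ioi u, ψ z * Real.exp (-(a * z)))
        + γ * Real.exp (-(b * u)) * (∫ z in (0:ℝ)..u, ψ z * Real.exp (b * z))
        + (γ / b) * Real.exp (-(b * u))) ∧
    (∀ A : ℝ,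
      (∀ u : ℝ, 0 ≤ u →
        c * (A * Real.exp (-r * u))
          = -δ * Real.exp (a * u)
              * (∫ z in Ioi u, A * Real.exp (-r * z) * Real.exp (-(a * z)))
            + γ * Real.exp (-(b * u))
              * (∫ z in (0:ℝ)..u, A * Real.exp (-r * z) * Real.exp (b * z))
            + (γ / b) * Real.exp (-(b * u))) →
      A = 1 - r / b) :=
  exponential_solution_of_integral_equation_general a b γ δ ha hγ c r hr_mem hr_eq ψ hψ
end

section
/- Let (Q_i)_{i≥1} be i.i.d. real random variables on a probability space (Ω, F, P), and let r ∈ (0,∞) be such that E[e^{r·Q_1}] = 1 (an adjustment coefficient). Then for every u ∈ [0,∞): P(∃ n ≥ 1 : ∑_{i=1}^n Q_i > u) ≤ e^{−r·u} (the Lundberg bound). -/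
/-! The variables `X i = exp (r Q_i)` are independent, and have mean one by the adjustment
equation, so the partial products `M n = exp (r S_{n+1})` form a nonnegative martingale with `E M_0 = 1`.
Ruin above `u` means that `M` reaches `exp (r u)` at some time, and Ville's inequality (Doob's
maximal inequality, letting the horizon go to infinity) bounds the probability of that by
`E M_0 / exp (r u) = exp (-r u)`. -/

open MeasureTheory ProbabilityTheory Finset

namespace MeasureTheory

variable {Ω : Type*} {m : MeasurableSpace Ω} {μ : Measure Ω} [IsFiniteMeasure μ]

theorem Martingale.measure_exists_le_le_ofReal_integral_div {ℱ : Filtration ℕ m}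
    {f : ℕ → Ω → ℝ} (hf : Martingale f ℱ μ) (hnonneg : 0 ≤ f) {ε : ℝ} (hε : 0 < ε) :
    μ {ω | ∃ n, ε ≤ f n ω} ≤ ENNReal.ofReal (μ[f 0] / ε) := by
  set A : ℕ → Set Ω := fun N ↦
    {ω | ε ≤ (range (N + 1)).sup' nonempty_range_add_one fun k ↦ f k ω}
  have hA_mono : Monotone A := fun N N' hN _ hω ↦
    le_trans (α := ℝ) hω (sup'_mono _ (range_subset_range.mpr (by omega)) _)
  have hA_union : {ω | ∃ n, ε ≤ f n ω} ⊆ ⋃ N, A N := fun ω ⟨n, hn⟩ ↦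
    Set.mem_iUnion.mpr ⟨n, hn.trans (le_sup' (fun k ↦ f k ω) (self_mem_range_succ n))⟩
  have hA_le : ∀ N, ENNReal.ofReal ε * μ (A N) ≤ ENNReal.ofReal (μ[f 0]) := fun N ↦ by
    have hmax := maximal_ineq hf.submartingale hnonneg (ε := ε.toNNReal) N
    rw [Real.coe_toNNReal _ hε.le] at hmax
    calc ENNReal.ofReal ε * μ (A N) ≤ ENNReal.ofReal (∫ ω in A N, f N ω ∂μ) := hmax
      _ ≤ ENNReal.ofReal (μ[f N]) :=
          ENNReal.ofReal_le_ofReal <| setIntegral_le_integral (hf.integrable N)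
            (Filter.Eventually.of_forall (hnonneg N))
      _ = ENNReal.ofReal (μ[f 0]) := by
          rw [← setIntegral_univ, ← hf.setIntegral_eq (Nat.zero_le N) MeasurableSet.univ,
            setIntegral_univ]
  rw [ENNReal.ofReal_div_of_pos hε, ENNReal.le_div_iff_mul_le (by simp [hε]) (by simp), mul_comm]
  calc ENNReal.ofReal ε * μ {ω | ∃ n, ε ≤ f n ω}
      ≤ ENNReal.ofReal ε * μ (⋃ N, A N) := by gcongr
    _ ≤ ENNReal.ofReal (μ[f 0]) := by
      rw [hA_mono.measure_iUnion, ENNReal.mul_iSup]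
      exact iSup_le hA_le

end MeasureTheory

namespace ProbabilityTheory

variable {Ω : Type*} {m : MeasurableSpace Ω} {μ : Measure Ω} [IsFiniteMeasure μ]
  {X : ℕ → Ω → ℝ}

theorem iIndepFun.integrable_prod_range (hindep : iIndepFun X μ) (hmeas : ∀ i, Measurable (X i))
    (hint : ∀ i, Integrable (X i) μ) (n : ℕ) : Integrable (∏ i ∈ range n, X i) μ := by
  induction n with
  | zero => exact integrable_const 1
  | succ n ih =>
    rw [prod_range_succ]
    exact (hindep.indepFun_prod_range_succ hmeas n).integrable_mul ih (hint n)

theorem iIndepFun.condExp_natural_ae_eq_integral (hindep : iIndepFun X μ)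
    (hmeas : ∀ i, Measurable (X i)) (n : ℕ) :
    μ[X (n + 1) | Filtration.natural X (fun i ↦ (hmeas i).stronglyMeasurable) n]
      =ᵐ[μ] fun _ ↦ μ[X (n + 1)] := by
  have hpast : Indep (MeasurableSpace.comap (X (n + 1)) inferInstance)
      (⨆ k ∈ Set.Iic n, MeasurableSpace.comap (X k) inferInstance) μ := by
    have := indep_iSup_of_disjoint (fun k ↦ (hmeas k).comap_le) hindep
      (S := {n + 1}) (T := Set.Iic n) (by simp)
    rwa [_root_.iSup_singleton] at this
  exact condExp_indep_eq (hmeas _).comap_le (Filtration.le _ n)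
    (comap_measurable _).stronglyMeasurable hpast

theorem iIndepFun.martingale_prod_range_succ (hindep : iIndepFun X μ)
    (hmeas : ∀ i, Measurable (X i)) (hint : ∀ i, Integrable (X i) μ) (hmean : ∀ i, μ[X i] = 1) :
    Martingale (fun n ↦ ∏ i ∈ range (n + 1), X i)
      (Filtration.natural X (fun i ↦ (hmeas i).stronglyMeasurable)) μ := by
  have hcond := hindep.condExp_natural_ae_eq_integral hmeas
  set ℱ := Filtration.natural X (fun i ↦ (hmeas i).stronglyMeasurable)
  have hadapted : StronglyAdapted ℱ (fun n ↦ ∏ i ∈ range (n + 1), X i) := fun n ↦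
    Finset.stronglyMeasurable_prod _ fun i hi ↦ (Filtration.stronglyAdapted_natural _ i).mono
      (ℱ.mono (Nat.lt_succ_iff.mp (mem_range.mp hi)))
  refine martingale_nat hadapted (fun n ↦ hindep.integrable_prod_range hmeas hint _) fun n ↦ ?_
  have hpull := condExp_mul_of_stronglyMeasurable_left (μ := μ) (m := ℱ n) (hadapted n)
    (by rw [← prod_range_succ]; exact hindep.integrable_prod_range hmeas hint _) (hint (n + 1))
  rw [prod_range_succ _ (n + 1)]
  filter_upwards [hpull, hcond n] with ω hω hω'
  rw [hω, Pi.mul_apply, hω', hmean, mul_one]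

end ProbabilityTheory

/-- **Lundberg bound.** If `(Q_i)` is an i.i.d. sequence of real
random variables and `r > 0` is an adjustment coefficient, i.e. `E[exp (r Q_1)] = 1`,
then the ruin probability of the random walk `S_n = ∑_{i<n} Q_i` satisfies
`P(∃ n ≥ 1, S_n > u) ≤ e^{-ru}` for every `u ≥ 0`. -/
theorem lundberg_bound
    {Ω : Type*} [MeasurableSpace Ω] (P : Measure Ω) [IsProbabilityMeasure P]
    (Q : ℕ → Ω → ℝ) (hmeas : ∀ i, Measurable (Q i))
    (hindep : iIndepFun Q P)
    (hident : ∀ i, Measure.map (Q i) P = Measure.map (Q 0) P)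
    (r : ℝ) (hr : 0 < r)
    (hadj : ∫ ω, Real.exp (r * Q 0 ω) ∂P = 1) :
    ∀ u : ℝ, 0 ≤ u →
      (P {ω | ∃ n : ℕ, 1 ≤ n ∧ (∑ i ∈ Finset.range n, Q i ω) > u}).toReal
        ≤ Real.exp (-r * u) := by
  intro u _
  set X : ℕ → Ω → ℝ := fun i ω ↦ Real.exp (r * Q i ω)
  have hexp : Measurable fun x : ℝ ↦ Real.exp (r * x) := by fun_prop
  have hX_ident (i : ℕ) : IdentDistrib (X i) (X 0) P P :=
    IdentDistrib.comp (f := Q i) (g := Q 0)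
      ⟨(hmeas i).aemeasurable, (hmeas 0).aemeasurable, hident i⟩ hexp
  have hX_int (i : ℕ) : Integrable (X i) P :=
    (hX_ident i).integrable_iff.mpr (.of_integral_ne_zero (by simp [X, hadj]))
  have hX_mean (i : ℕ) : P[X i] = 1 := (hX_ident i).integral_eq.trans hadj
  have hX_indep : iIndepFun X P := hindep.comp _ fun _ ↦ hexp
  have hmart := hX_indep.martingale_prod_range_succ (fun i ↦ hexp.comp (hmeas i)) hX_int hX_mean
  have hruin : {ω | ∃ n : ℕ, 1 ≤ n ∧ (∑ i ∈ range n, Q i ω) > u} ⊆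
      {ω | ∃ n, Real.exp (r * u) ≤ (∏ i ∈ range (n + 1), X i) ω} := by
    rintro ω ⟨n, hn_pos, hn⟩
    obtain ⟨n, rfl⟩ := Nat.exists_eq_add_of_le' hn_pos
    refine ⟨n, ?_⟩
    rw [prod_apply, ← Real.exp_sum, ← mul_sum]
    exact Real.exp_le_exp.mpr (by nlinarith)
  have hnonneg : 0 ≤ fun n ↦ ∏ i ∈ range (n + 1), X i := fun n ω ↦ by
    simpa only [Pi.zero_apply, prod_apply] using
      prod_nonneg fun i _ ↦ (Real.exp_pos (r * Q i ω)).le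
  have hville := hmart.measure_exists_le_le_ofReal_integral_div hnonneg (Real.exp_pos (r * u))
  rw [zero_add, prod_range_one, hX_mean] at hville
  calc (P {ω | ∃ n : ℕ, 1 ≤ n ∧ (∑ i ∈ range n, Q i ω) > u}).toReal
      ≤ 1 / Real.exp (r * u) :=
        ENNReal.toReal_le_of_le_ofReal (by positivity) ((measure_mono hruin).trans hville)
    _ = Real.exp (-r * u) := by rw [neg_mul, Real.exp_neg, one_div]
end
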